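/- Let n ≥ 0, let U ⊆ ℝ^{n+1} be open, and let ρ : U → ℝ be smooth. Define ρ̃(t,y) := t²·ρ(y/t) on the open cone {(t,y) ∈ (0,∞)×ℝ^{n+1} : y/t ∈ U}. Then for every x ∈ U, the determinant of the (n+2)×(n+2) Hessian of ρ̃ (with respect to all n+2 variables) at the point (1,x) equals J[ρ](x). -/

import Mathlib

open MeasureTheory Topology

noncomputable def pd {m : ℕ} (f : (Fin m → ℝ) → ℝ) (i : Fin m) (x : Fin m → ℝ) : ℝ :=
  fderiv ℝ f x (Pi.single i 1)

noncomputable def hess {m : ℕ} (f : (Fin m → ℝ) → ℝ) (x : Fin m → ℝ) :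
    Matrix (Fin m) (Fin m) ℝ :=
  Matrix.of fun i j => pd (pd f j) i x

noncomputable def Jop {n : ℕ} (ρ : (Fin (n + 1) → ℝ) → ℝ) (x : Fin (n + 1) → ℝ) : ℝ :=
  (Matrix.of (fun I J : Fin (n + 2) =>
    Fin.cases (Fin.cases (2 * ρ x) (fun j => pd ρ j x) J)
      (fun i => Fin.cases (pd ρ i x) (fun j => hess ρ x i j) J) I)).det

structure IsDefiningFn (n : ℕ) (Ω V : Set (Fin (n + 1) → ℝ)) (ρ : (Fin (n + 1) → ℝ) → ℝ) : Prop where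
  openV : IsOpen V
  frontier_sub : frontier Ω ⊆ V
  smooth : ContDiffOn ℝ (⊤ : ℕ∞) ρ V
  neg_iff : ∀ x ∈ V, (x ∈ Ω ↔ ρ x < 0)
  zero_bdry : ∀ x ∈ frontier Ω, ρ x = 0
  grad_ne : ∀ x ∈ frontier Ω, ∃ i, pd ρ i x ≠ 0

def StrictlyConvexWith (n : ℕ) (Ω : Set (Fin (n + 1) → ℝ)) (ρ : (Fin (n + 1) → ℝ) → ℝ) : Prop :=
  ∀ p ∈ frontier Ω, ∀ w : Fin (n + 1) → ℝ, w ≠ 0 →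
    (∑ i, pd ρ i p * w i) = 0 → 0 < ∑ i, ∑ j, hess ρ p i j * w i * w j

structure IsBddStrictlyConvexDomain (n : ℕ) (Ω : Set (Fin (n + 1) → ℝ)) : Prop where
  isOpen : IsOpen Ω
  nonempty : Ω.Nonempty
  bounded : Bornology.IsBounded Ω
  convexBdry : ∃ V ρ, IsDefiningFn n Ω V ρ ∧ StrictlyConvexWith n Ω ρ

/-- The degree-2 homogeneous extension `ρ̃(t,y) = t^2 ρ(y/t)`. -/
noncomputable def homog2 {n : ℕ} (ρ : (Fin (n + 1) → ℝ) → ℝ) (z : Fin (n + 2) → ℝ) : ℝ :=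
  z 0 ^ 2 * ρ fun i : Fin (n + 1) => z i.succ / z 0

/-!
Since `ρ̃` is homogeneous of degree 2, each first partial `∂_I ρ̃` is homogeneous of degree 1: it is
the degree-1 extension of an explicit profile in `ρ` and `∇ρ` (for `I = 0` Euler's `2ρ - ⟨y, ∇ρ⟩`).
Differentiating once more at `(1, x)` gives `Hess ρ̃ (1, x) = Sᵀ M S`, where `M` is the matrix of
`J[ρ](x)` and `S` is the shear `e₀ ↦ (1, -x)`, `eᵢ₊₁ ↦ eᵢ₊₁`. As `det S = 1`, the determinants
agree.
-/

section HomogeneousExtension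

open ContinuousLinearMap Matrix

variable {n : ℕ}

theorem Filter.EventuallyEq.pd_eq {m : ℕ} {f g : (Fin m → ℝ) → ℝ} {x : Fin m → ℝ}
    (h : f =ᶠ[𝓝 x] g) (i : Fin m) : pd f i x = pd g i x := by
  rw [pd, pd, h.fderiv_eq]

theorem fderiv_apply_eq_sum_pd {m : ℕ} (f : (Fin m → ℝ) → ℝ) (x v : Fin m → ℝ) :
    fderiv ℝ f x v = ∑ k, v k * pd f k x := by
  conv_lhs => rw [pi_eq_sum_univ' v]
  simp [pd, map_sum]

theorem ContDiffAt.differentiableAt_pd {m : ℕ} {f : (Fin m → ℝ) → ℝ} {x : Fin m → ℝ}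
    (hf : ContDiffAt ℝ 2 f x) (i : Fin m) : DifferentiableAt ℝ (pd f i) x :=
  ((hf.fderiv_right (m := 1) (by norm_num)).differentiableAt (by norm_num)).clm_apply
    (differentiableAt_const _)

noncomputable def dehom (z : Fin (n + 2) → ℝ) : Fin (n + 1) → ℝ := fun i => z i.succ / z 0

noncomputable def tailCLM (n : ℕ) : (Fin (n + 2) → ℝ) →L[ℝ] (Fin (n + 1) → ℝ) :=
  ContinuousLinearMap.pi fun i => proj i.succ

theorem dehom_cons_one (x : Fin (n + 1) → ℝ) : dehom (Fin.cons 1 x) = x := by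
  funext i
  simp [dehom]

theorem hasFDerivAt_dehom {z : Fin (n + 2) → ℝ} (hz : z 0 ≠ 0) :
    HasFDerivAt dehom ((z 0)⁻¹ • (tailCLM n - (proj 0).smulRight (dehom z))) z := by
  have hinv : HasFDerivAt (fun w : Fin (n + 2) → ℝ => (w 0)⁻¹) _ z :=
    (hasFDerivAt_inv hz).comp z (hasFDerivAt_apply 0 z)
  have hdehom : dehom = fun w : Fin (n + 2) → ℝ => (w 0)⁻¹ • tailCLM n w := by
    funext w i
    simp [dehom, tailCLM, div_eq_inv_mul]
  rw [hdehom]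
  refine (hinv.smul (tailCLM n).hasFDerivAt).congr_fderiv ?_
  ext v i
  simp [tailCLM]
  field_simp
  ring

theorem continuousAt_dehom {z : Fin (n + 2) → ℝ} (hz : z 0 ≠ 0) : ContinuousAt dehom z :=
  (hasFDerivAt_dehom hz).continuousAt

noncomputable def homogExt (m : ℕ) (φ : (Fin (n + 1) → ℝ) → ℝ) (z : Fin (n + 2) → ℝ) : ℝ :=
  z 0 ^ m * φ (dehom z)

theorem homog2_eq_homogExt (ρ : (Fin (n + 1) → ℝ) → ℝ) : homog2 ρ = homogExt 2 ρ := rfl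

noncomputable def homogPartial (m : ℕ) (φ : (Fin (n + 1) → ℝ) → ℝ) :
    Fin (n + 2) → (Fin (n + 1) → ℝ) → ℝ :=
  Fin.cases (fun y => m * φ y - ∑ k, y k * pd φ k y) (pd φ)

theorem pd_homogExt_succ (m : ℕ) {φ : (Fin (n + 1) → ℝ) → ℝ} {z : Fin (n + 2) → ℝ}
    (hz : z 0 ≠ 0) (hφ : DifferentiableAt ℝ φ (dehom z)) (I : Fin (n + 2)) :
    pd (homogExt (m + 1) φ) I z = homogExt m (homogPartial (m + 1) φ I) z := by
  have h : HasFDerivAt (homogExt (m + 1) φ) _ z := ((hasFDerivAt_apply 0 z).pow (m + 1)).mul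
    (hφ.hasFDerivAt.comp z (hasFDerivAt_dehom hz))
  rw [pd, h.fderiv]
  cases I using Fin.cases with
  | zero =>
    simp [homogExt, homogPartial, tailCLM, fderiv_apply_eq_sum_pd]
    field_simp
    ring
  | succ j =>
    simp [homogExt, homogPartial, tailCLM, fderiv_apply_eq_sum_pd, Pi.single_apply]
    field_simp
    ring

theorem pd_homogPartial_zero (m : ℕ) {φ : (Fin (n + 1) → ℝ) → ℝ} {x : Fin (n + 1) → ℝ}
    (hφ : DifferentiableAt ℝ φ x) (hpd : ∀ k, DifferentiableAt ℝ (pd φ k) x) (i : Fin (n + 1)) :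
    pd (homogPartial m φ 0) i x = (m - 1) * pd φ i x - ∑ k, x k * pd (pd φ k) i x := by
  have h : HasFDerivAt (homogPartial m φ 0) _ x := (hφ.hasFDerivAt.const_mul (m : ℝ)).sub
    (HasFDerivAt.fun_sum fun k _ => (hasFDerivAt_apply k x).mul (hpd k).hasFDerivAt)
  rw [pd, h.fderiv]
  simp only [pd, _root_.sub_apply, _root_.smul_apply, smul_eq_mul, _root_.sum_apply,
    _root_.add_apply, proj_apply, Pi.single_apply, mul_ite, mul_one, mul_zero,
    Finset.sum_add_distrib, Finset.sum_ite_eq', Finset.mem_univ, if_true]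
  ring

theorem ContDiffAt.differentiableAt_homogPartial {φ : (Fin (n + 1) → ℝ) → ℝ}
    {x : Fin (n + 1) → ℝ} (hφ : ContDiffAt ℝ 2 φ x) (m : ℕ) (J : Fin (n + 2)) :
    DifferentiableAt ℝ (homogPartial m φ J) x := by
  have hφ' : DifferentiableAt ℝ φ x := hφ.differentiableAt (by norm_num)
  have hpd := hφ.differentiableAt_pd
  cases J using Fin.cases with
  | zero =>
    show DifferentiableAt ℝ (fun y => m * φ y - ∑ k, y k * pd φ k y) x
    fun_prop
  | succ j => exact hpd j

theorem hess_homogExt_two_cons_one {ρ : (Fin (n + 1) → ℝ) → ℝ} {x : Fin (n + 1) → ℝ}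
    (hρ : ContDiffAt ℝ 2 ρ x) :
    hess (homogExt 2 ρ) (Fin.cons 1 x) = Matrix.of fun I J =>
      homogPartial 1 (homogPartial 2 ρ J) I x := by
  ext I J
  set c : Fin (n + 2) → ℝ := Fin.cons 1 x
  have hc : c 0 ≠ 0 := by simp [c]
  have hρ_near : ∀ᶠ y in 𝓝 (dehom c), DifferentiableAt ℝ ρ y := by
    rw [dehom_cons_one]
    exact (hρ.eventually (by simp)).mono fun y hy => hy.differentiableAt (by norm_num)
  have hcone : ∀ᶠ z in 𝓝 c, z 0 ≠ 0 ∧ DifferentiableAt ℝ ρ (dehom z) :=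
    ((continuous_apply 0).continuousAt.eventually_ne hc).and
      ((continuousAt_dehom hc).eventually hρ_near)
  have hfirst : pd (homogExt 2 ρ) J =ᶠ[𝓝 c] homogExt 1 (homogPartial 2 ρ J) :=
    hcone.mono fun z hz => pd_homogExt_succ 1 hz.1 hz.2 J
  calc hess (homogExt 2 ρ) c I J = pd (homogExt 1 (homogPartial 2 ρ J)) I c := hfirst.pd_eq I
    _ = homogExt 0 (homogPartial 1 (homogPartial 2 ρ J) I) c := by
        refine pd_homogExt_succ 0 hc ?_ I
        rw [dehom_cons_one]
        exact hρ.differentiableAt_homogPartial 2 J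
    _ = homogPartial 1 (homogPartial 2 ρ J) I x := by simp [homogExt, c, dehom_cons_one]

noncomputable def shear (x : Fin (n + 1) → ℝ) : Matrix (Fin (n + 2)) (Fin (n + 2)) ℝ :=
  1 - vecMulVec (Fin.cons 0 x) (Pi.single 0 1)

theorem det_shear (x : Fin (n + 1) → ℝ) : (shear x).det = 1 := by
  rw [shear, vecMulVec_eq Unit, det_one_sub_mul_comm]
  simp

theorem transpose_shear_mul_apply_zero (x : Fin (n + 1) → ℝ)
    (N : Matrix (Fin (n + 2)) (Fin (n + 2)) ℝ) (J : Fin (n + 2)) :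
    ((shear x)ᵀ * N) 0 J = N 0 J - ∑ k, x k * N k.succ J := by
  simp [shear, mul_apply, vecMulVec_apply, Fin.sum_univ_succ, sub_mul, one_apply]

theorem transpose_shear_mul_apply_succ (x : Fin (n + 1) → ℝ)
    (N : Matrix (Fin (n + 2)) (Fin (n + 2)) ℝ) (i : Fin (n + 1)) (J : Fin (n + 2)) :
    ((shear x)ᵀ * N) i.succ J = N i.succ J := by
  simp [shear, mul_apply, vecMulVec_apply, one_apply]

theorem mul_shear_apply_zero (x : Fin (n + 1) → ℝ)
    (N : Matrix (Fin (n + 2)) (Fin (n + 2)) ℝ) (I : Fin (n + 2)) :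
    (N * shear x) I 0 = N I 0 - ∑ l, x l * N I l.succ := by
  simp [shear, mul_apply, vecMulVec_apply, Fin.sum_univ_succ, mul_sub, one_apply, mul_comm]

theorem mul_shear_apply_succ (x : Fin (n + 1) → ℝ)
    (N : Matrix (Fin (n + 2)) (Fin (n + 2)) ℝ) (I : Fin (n + 2)) (j : Fin (n + 1)) :
    (N * shear x) I j.succ = N I j.succ := by
  simp [shear, mul_apply, vecMulVec_apply, one_apply]

noncomputable def borderedHessian (ρ : (Fin (n + 1) → ℝ) → ℝ) (x : Fin (n + 1) → ℝ) :
    Matrix (Fin (n + 2)) (Fin (n + 2)) ℝ :=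
  Matrix.of fun I J : Fin (n + 2) =>
    Fin.cases (Fin.cases (2 * ρ x) (fun j => pd ρ j x) J)
      (fun i => Fin.cases (pd ρ i x) (fun j => hess ρ x i j) J) I

theorem Jop_eq_det_borderedHessian (ρ : (Fin (n + 1) → ℝ) → ℝ) (x : Fin (n + 1) → ℝ) :
    Jop ρ x = (borderedHessian ρ x).det := rfl

noncomputable def valueGradientMatrix (F : Fin (n + 2) → (Fin (n + 1) → ℝ) → ℝ)
    (x : Fin (n + 1) → ℝ) : Matrix (Fin (n + 2)) (Fin (n + 2)) ℝ :=
  Matrix.of fun I J => Fin.cases (F J x) (fun i => pd (F J) i x) I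

theorem of_homogPartial_one_eq_transpose_shear_mul (F : Fin (n + 2) → (Fin (n + 1) → ℝ) → ℝ)
    (x : Fin (n + 1) → ℝ) :
    Matrix.of (fun I J => homogPartial 1 (F J) I x) = (shear x)ᵀ * valueGradientMatrix F x := by
  ext I J
  cases I using Fin.cases with
  | zero => simp [transpose_shear_mul_apply_zero, homogPartial, valueGradientMatrix]
  | succ i => simp [transpose_shear_mul_apply_succ, homogPartial, valueGradientMatrix]

theorem valueGradientMatrix_homogPartial_two {ρ : (Fin (n + 1) → ℝ) → ℝ}
    {x : Fin (n + 1) → ℝ} (hρ : ContDiffAt ℝ 2 ρ x) :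
    valueGradientMatrix (homogPartial 2 ρ) x = borderedHessian ρ x * shear x := by
  ext I J
  cases J using Fin.cases with
  | zero =>
    rw [mul_shear_apply_zero]
    cases I using Fin.cases with
    | zero => simp [valueGradientMatrix, borderedHessian, homogPartial]
    | succ i =>
      simp only [valueGradientMatrix, borderedHessian, hess, of_apply, Fin.cases_zero,
        Fin.cases_succ,
        pd_homogPartial_zero 2 (hρ.differentiableAt (by norm_num)) hρ.differentiableAt_pd]
      norm_num
  | succ j =>
    rw [mul_shear_apply_succ]
    cases I using Fin.cases with
    | zero => simp [valueGradientMatrix, borderedHessian, homogPartial]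
    | succ i => simp [valueGradientMatrix, borderedHessian, homogPartial, hess]

end HomogeneousExtension

/-- The determinant of the full `(n+2)×(n+2)` Hessian of the homogeneous
extension `ρ̃` at `(1,x)` equals `J[ρ](x)`. -/
theorem stmt18 (n : ℕ) (U : Set (Fin (n + 1) → ℝ)) (hU : IsOpen U)
    (ρ : (Fin (n + 1) → ℝ) → ℝ) (hρ : ContDiffOn ℝ (⊤ : ℕ∞) ρ U) :
    ∀ x ∈ U, (hess (homog2 ρ) (Fin.cons 1 x)).det = Jop ρ x := by
  intro x hx
  have hρx : ContDiffAt ℝ 2 ρ x :=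
    (hρ.contDiffAt (hU.mem_nhds hx)).of_le (WithTop.coe_le_coe.mpr le_top)
  rw [homog2_eq_homogExt, hess_homogExt_two_cons_one hρx,
    of_homogPartial_one_eq_transpose_shear_mul, valueGradientMatrix_homogPartial_two hρx,
    Jop_eq_det_borderedHessian,
    Matrix.det_mul, Matrix.det_mul, Matrix.det_transpose, det_shear, one_mul, mul_one]
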